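/- Let ψ′(0+) > −∞. Let C_U ∈ ℝ, let f : ℝ → ℝ be continuous and piecewise continuously differentiable, set f̃(x) = f(x) + C_U q x, and assume e^{−Φ(q) y} f̃(y) → 0 as y → ∞, Ψ(s*; |f|) < ∞, and Ψ(x; |f̃′|) < ∞ for all x. Suppose a̲ ≤ ā are real numbers such that f̃′(x) < 0 for x < ā and f̃′(x) > 0 for x > ā, and Ψ(x; f̃′) < 0 for x < a̲ while Ψ(x; f̃′) > 0 for x > a̲. Fix s* ≤ a̲ and define v(x) = ((Φ(q)/q) Ψ(s*; f) + C_U/Φ(q)) Z(x−s*) − C_U R(x−s*) − φ_{s*}(x; f). Then for every x < s*, v is affine with slope −C_U at x, the integral appearing in L v(x) converges absolutely, and (L − q) v(x) + f(x) = f̃(x) − f̃(s*) − Ψ(s*; f̃′) ≥ 0. -/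

import Mathlib

open MeasureTheory Set Filter Topology

noncomputable section

/-- The Laplace exponent of a spectrally negative Lévy process with data `(γ, σ, ν)`. -/
def psi (γ σ : ℝ) (ν : Measure ℝ) (s : ℝ) : ℝ :=
  γ * s + σ ^ 2 * s ^ 2 / 2 +
    ∫ z in Set.Iio (0 : ℝ), (Real.exp (s * z) - 1 - s * z * (if -1 < z then (1:ℝ) else 0)) ∂ν

/-- `Φ(q) = sup {λ ≥ 0 : ψ(λ) = q}`. -/
def PhiQ (γ σ : ℝ) (ν : Measure ℝ) (q : ℝ) : ℝ :=
  sSup {l : ℝ | 0 ≤ l ∧ psi γ σ ν l = q}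

/-- `Z^{(q)}(x) = 1 + q ∫₀ˣ W(y) dy`. -/
def Zfun (q : ℝ) (W : ℝ → ℝ) (x : ℝ) : ℝ := 1 + q * ∫ y in (0:ℝ)..x, W y

/-- `Z̄^{(q)}(x) = ∫₀ˣ Z(z) dz`. -/
def Zbar (q : ℝ) (W : ℝ → ℝ) (x : ℝ) : ℝ := ∫ z in (0:ℝ)..x, Zfun q W z

/-- `R^{(q)}(x) = Z̄(x) + ψ'(0+)/q`. -/
def Rfun (q psi'0 : ℝ) (W : ℝ → ℝ) (x : ℝ) : ℝ := Zbar q W x + psi'0 / q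

/-- `Ψ(s; h) = ∫_s^∞ e^{-Φ(q)(y-s)} h(y) dy`. -/
def PsiInt (Φq s : ℝ) (h : ℝ → ℝ) : ℝ := ∫ y in Set.Ioi s, Real.exp (-Φq * (y - s)) * h y

/-- `φ_s(x; h) = ∫_s^x W(x-y) h(y) dy`. -/
def phiInt (W : ℝ → ℝ) (s x : ℝ) (h : ℝ → ℝ) : ℝ := ∫ y in s..x, W (x - y) * h y

/-- Integrand of the nonlocal part of the generator `L`. -/
def genInt (h : ℝ → ℝ) (x z : ℝ) : ℝ :=
  h (x + z) - h x - deriv h x * z * (if -1 < z then (1:ℝ) else 0)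

/-- The generator `L` of the Lévy process, applied to a sufficiently smooth function. -/
def Lgen (γ σ : ℝ) (ν : Measure ℝ) (h : ℝ → ℝ) (x : ℝ) : ℝ :=
  γ * deriv h x + σ ^ 2 / 2 * deriv (deriv h) x + ∫ z in Set.Iio (0 : ℝ), genInt h x z ∂ν

/-- Candidate value function for impulse control:
`v(x) = ((Φ(q)/q) Ψ(s;f) + C_U/Φ(q)) Z(x−s) − C_U R(x−s) − φ_s(x; f)`. -/
def vImp (q Φq psi'0 C_U s : ℝ) (W f : ℝ → ℝ) (x : ℝ) : ℝ :=
  (Φq / q * PsiInt Φq s f + C_U / Φq) * Zfun q W (x - s)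
    - C_U * Rfun q psi'0 W (x - s) - phiInt W s x f

/-!
Below `s` the scale-function terms are trivial (`Z = 1`, `Z̄(y) = y`, `φ_s = 0`), so `v` is affine
with slope `-C_U` there and only the jumps below `-1` contribute to `L v`. A finite `ψ'(0+)` forces
`∫_{z ≤ -1} |z| ν(dz) < ∞` with `∫_{z ≤ -1} z ν(dz) = ψ'(0+) - γ`: as `s ↓ 0` the functions
`(1 - e^{sz}) / s` lie in `[0, -z]` and tend to `-z`, while their integrals are read off from
`ψ(s) / s`, so Fatou's lemma and then dominated convergence apply.
Hence `L v(x) = -C_U ψ'(0+)`, and integrating by parts against `e^{-Φ(q) y}` turns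
`(L - q) v(x) + f(x)` into `f̃(x) - f̃(s) - Ψ(s; f̃')`. This is nonnegative because `f̃` decreases
left of `ā` and `Ψ(·; f̃')`, being continuous, is nonpositive at `s ≤ a̲`.
-/

theorem integrable_and_integral_eq_of_tendsto_of_le {α ι : Type*} [MeasurableSpace α]
    {μ : Measure α} {l : Filter ι} [l.IsCountablyGenerated] [l.NeBot] {F : ι → α → ℝ}
    {g : α → ℝ} {L : ℝ} (hF_meas : ∀ i, AEStronglyMeasurable (F i) μ)
    (hF_int : ∀ᶠ i in l, Integrable (F i) μ)
    (hF_bound : ∀ᶠ i in l, ∀ᵐ x ∂μ, 0 ≤ F i x ∧ F i x ≤ g x)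
    (hF_lim : ∀ᵐ x ∂μ, Tendsto (F · x) l (𝓝 (g x)))
    (hL : Tendsto (fun i ↦ ∫ x, F i x ∂μ) l (𝓝 L)) :
    Integrable g μ ∧ ∫ x, g x ∂μ = L := by
  have hg_nonneg : 0 ≤ᵐ[μ] g := by
    obtain ⟨i, hi⟩ := hF_bound.exists
    filter_upwards [hi] with x hx using hx.1.trans hx.2
  have hfatou : ∫⁻ x, ENNReal.ofReal (g x) ∂μ ≤ ENNReal.ofReal L := calc
    ∫⁻ x, ENNReal.ofReal (g x) ∂μ = ∫⁻ x, liminf (fun i ↦ ENNReal.ofReal (F i x)) l ∂μ := by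
      refine lintegral_congr_ae ?_
      filter_upwards [hF_lim] with x hx
      exact ((ENNReal.continuous_ofReal.tendsto _).comp hx).liminf_eq.symm
    _ ≤ liminf (fun i ↦ ∫⁻ x, ENNReal.ofReal (F i x) ∂μ) l :=
      lintegral_liminf_le' fun i ↦ (hF_meas i).aemeasurable.ennreal_ofReal
    _ = ENNReal.ofReal L := by
      refine Tendsto.liminf_eq (((ENNReal.continuous_ofReal.tendsto _).comp hL).congr' ?_)
      filter_upwards [hF_int, hF_bound] with i hi hb
      exact ofReal_integral_eq_lintegral_ofReal hi (by filter_upwards [hb] with x hx using hx.1)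
  have hg_int : Integrable g μ :=
    ⟨aestronglyMeasurable_of_tendsto_ae l hF_meas hF_lim,
      (hasFiniteIntegral_iff_ofReal hg_nonneg).2 (hfatou.trans_lt ENNReal.ofReal_lt_top)⟩
  refine ⟨hg_int, tendsto_nhds_unique ?_ hL⟩
  refine tendsto_integral_filter_of_dominated_convergence g (.of_forall hF_meas) ?_ hg_int hF_lim
  filter_upwards [hF_bound] with i hi
  filter_upwards [hi] with x hx
  rw [Real.norm_eq_abs, abs_of_nonneg hx.1]
  exact hx.2

theorem integral_Ioi_of_hasDerivWithinAt_Ioi_of_tendsto {g g' : ℝ → ℝ} {a m : ℝ}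
    (hcont : ContinuousOn g (Ici a)) (hderiv : ∀ x ∈ Ioi a, HasDerivWithinAt g (g' x) (Ioi x) x)
    (hint : IntegrableOn g' (Ioi a)) (hlim : Tendsto g atTop (𝓝 m)) :
    ∫ x in Ioi a, g' x = m - g a := by
  refine tendsto_nhds_unique (intervalIntegral_tendsto_integral_Ioi a hint tendsto_id)
    ((hlim.sub_const (g a)).congr' ?_)
  filter_upwards [eventually_ge_atTop a] with b hb
  exact (intervalIntegral.integral_eq_sub_of_hasDeriv_right_of_le hb
    (hcont.mono Icc_subset_Ici_self) (fun x hx ↦ hderiv x hx.1)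
    ((intervalIntegrable_iff_integrableOn_Ioc_of_le hb).2
      (hint.mono_set Ioc_subset_Ioi_self))).symm

theorem antitoneOn_Iic_of_hasDerivWithinAt_Ici_nonpos {g g' : ℝ → ℝ} {a : ℝ}
    (hcont : Continuous g) (hderiv : ∀ x, HasDerivWithinAt g (g' x) (Ici x) x)
    (hneg : ∀ x < a, g' x ≤ 0) : AntitoneOn g (Iic a) := by
  intro x _ y (hy : y ≤ a) hxy
  exact image_le_of_deriv_right_le_deriv_boundary (B := fun _ ↦ g x) (B' := 0)
    hcont.continuousOn (fun z _ ↦ hderiv z) le_rfl continuousOn_const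
    (fun z _ ↦ hasDerivWithinAt_const z _ (g x)) (fun z hz ↦ hneg z (hz.2.trans_le hy))
    ⟨hxy, le_rfl⟩

theorem measurable_of_hasDerivWithinAt_Ici {f f' : ℝ → ℝ}
    (hf' : ∀ x, HasDerivWithinAt f (f' x) (Ici x) x) : Measurable f' := by
  have : f' = fun x ↦ derivWithin f (Ici x) x :=
    funext fun x ↦ ((hf' x).derivWithin (uniqueDiffOn_Ici x x self_mem_Ici)).symm
  rw [this]
  exact measurable_derivWithin_Ici f

section ScaleFunctions

variable {q : ℝ} {W : ℝ → ℝ}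

lemma Zfun_of_nonpos (hW : ∀ x < 0, W x = 0) {t : ℝ} (ht : t ≤ 0) : Zfun q W t = 1 := by
  have : ∫ y in (0:ℝ)..t, W y = 0 := by
    refine intervalIntegral.integral_zero_ae ?_
    filter_upwards [(countable_singleton (0:ℝ)).ae_notMem volume] with y hy0 hy
    rw [uIoc_of_ge ht] at hy
    exact hW y (lt_of_le_of_ne hy.2 hy0)
  simp [Zfun, this]

lemma Zbar_of_nonpos (hW : ∀ x < 0, W x = 0) {t : ℝ} (ht : t ≤ 0) : Zbar q W t = t := by
  have : EqOn (Zfun q W) 1 (uIcc 0 t) := fun z hz ↦ by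
    rw [uIcc_of_ge ht] at hz
    exact Zfun_of_nonpos hW hz.2
  simp [Zbar, intervalIntegral.integral_congr this]

lemma phiInt_of_le (hW : ∀ x < 0, W x = 0) (h : ℝ → ℝ) {s x : ℝ} (hx : x ≤ s) :
    phiInt W s x h = 0 := by
  refine intervalIntegral.integral_zero_ae (Eventually.of_forall fun y hy ↦ ?_)
  rw [uIoc_of_ge hx] at hy
  rw [hW _ (by linarith [hy.1]), zero_mul]

lemma vImp_of_le (hW : ∀ x < 0, W x = 0) (Φq psi'0 C_U : ℝ) (f : ℝ → ℝ) {s x : ℝ}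
    (hx : x ≤ s) :
    vImp q Φq psi'0 C_U s W f x
      = Φq / q * PsiInt Φq s f + C_U / Φq - C_U * (x - s + psi'0 / q) := by
  rw [vImp, Zfun_of_nonpos hW (by linarith), Rfun, Zbar_of_nonpos hW (by linarith),
    phiInt_of_le hW f hx]
  ring

end ScaleFunctions

section Generator

variable {h : ℝ → ℝ} {s b : ℝ}

lemma deriv_eq_of_affine_Iic (hh : ∀ y ≤ s, h y = h s + b * (y - s)) {x : ℝ} (hx : x < s) :
    deriv h x = b := by
  have hev : h =ᶠ[𝓝 x] fun y ↦ h s + b * (y - s) := by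
    filter_upwards [Iio_mem_nhds hx] with y hy using hh y hy.le
  rw [hev.deriv_eq]
  simp

lemma deriv_deriv_eq_zero_of_affine_Iic (hh : ∀ y ≤ s, h y = h s + b * (y - s)) {x : ℝ}
    (hx : x < s) : deriv (deriv h) x = 0 := by
  have hev : deriv h =ᶠ[𝓝 x] fun _ ↦ b := by
    filter_upwards [Iio_mem_nhds hx] with y hy using deriv_eq_of_affine_Iic hh hy
  rw [hev.deriv_eq, deriv_const]

lemma genInt_of_affine_Iic (hh : ∀ y ≤ s, h y = h s + b * (y - s)) {x z : ℝ} (hx : x < s)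
    (hz : z < 0) : genInt h x z = (Iic (-1)).indicator (fun z ↦ b * z) z := by
  rw [genInt, deriv_eq_of_affine_Iic hh hx, hh x hx.le, hh (x + z) (by linarith)]
  by_cases hz1 : -1 < z
  · rw [if_pos hz1, indicator_of_notMem (show z ∉ Iic (-1) from not_le.2 hz1)]; ring
  · rw [if_neg hz1, indicator_of_mem (show z ∈ Iic (-1) from not_lt.1 hz1)]; ring

variable {γ σ : ℝ} {ν : Measure ℝ}

lemma Lgen_of_affine_Iic (hh : ∀ y ≤ s, h y = h s + b * (y - s)) {x : ℝ} (hx : x < s)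
    (hν : IntegrableOn (fun z ↦ z) (Iic (-1)) ν) :
    IntegrableOn (genInt h x) (Iio 0) ν ∧
      Lgen γ σ ν h x = b * (γ + ∫ z in Iic (-1), z ∂ν) := by
  have heq : EqOn (genInt h x) ((Iic (-1)).indicator fun z ↦ b * z) (Iio 0) :=
    fun z hz ↦ genInt_of_affine_Iic hh hx hz
  have hsub : Iic (-1 : ℝ) ⊆ Iio 0 := Iic_subset_Iio.2 (by norm_num)
  refine ⟨?_, ?_⟩
  · refine IntegrableOn.congr_fun ?_ heq.symm measurableSet_Iio
    exact (integrable_indicator_iff measurableSet_Iic |>.2 (hν.const_mul b)).integrableOn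
  · rw [Lgen, deriv_eq_of_affine_Iic hh hx, deriv_deriv_eq_zero_of_affine_Iic hh hx,
      setIntegral_congr_fun measurableSet_Iio heq, setIntegral_indicator measurableSet_Iic,
      inter_eq_right.2 hsub, integral_const_mul]
    ring

end Generator

section LevyMeasure

open Real

variable {ν : Measure ℝ}

lemma isFiniteMeasure_restrict_Iic_neg_one (hν : Integrable (fun z ↦ min 1 (z ^ 2)) ν) :
    IsFiniteMeasure (ν.restrict (Iic (-1))) := by
  have h1 : IntegrableOn (fun _ ↦ (1:ℝ)) (Iic (-1)) ν :=
    hν.integrableOn.congr_fun (fun z (hz : z ≤ -1) ↦ min_eq_left (by nlinarith))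
      measurableSet_Iic
  exact isFiniteMeasure_restrict.2
    ((integrableOn_const_iff (C := (1:ℝ))).1 h1 |>.resolve_left (by simp)).ne

lemma integrableOn_sq_Ioo_neg_one_zero (hν : Integrable (fun z ↦ min 1 (z ^ 2)) ν) :
    IntegrableOn (fun z ↦ z ^ 2) (Ioo (-1) 0) ν :=
  hν.integrableOn.congr_fun (fun z hz ↦ min_eq_right (by nlinarith [hz.1, hz.2]))
    measurableSet_Ioo

lemma norm_exp_mul_sub_one_sub_le {s z : ℝ} (hs : |s| ≤ 1) (hz : |z| ≤ 1) :
    ‖exp (s * z) - 1 - s * z‖ ≤ s ^ 2 * z ^ 2 := by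
  rw [Real.norm_eq_abs, ← mul_pow]
  exact abs_exp_sub_one_sub_id_le (by rw [abs_mul]; nlinarith [abs_nonneg s, abs_nonneg z])

lemma integrableOn_exp_mul_sub_one_sub_Ioo (hν : Integrable (fun z ↦ min 1 (z ^ 2)) ν)
    {s : ℝ} (hs : |s| ≤ 1) :
    IntegrableOn (fun z ↦ exp (s * z) - 1 - s * z) (Ioo (-1) 0) ν :=
  Integrable.mono' ((integrableOn_sq_Ioo_neg_one_zero hν).const_mul (s ^ 2))
    (by fun_prop) (ae_restrict_of_forall_mem measurableSet_Ioo fun z hz ↦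
      norm_exp_mul_sub_one_sub_le hs (abs_le.2 ⟨hz.1.le, by linarith [hz.2]⟩))

lemma integrableOn_exp_mul_sub_one_Iic (hν : Integrable (fun z ↦ min 1 (z ^ 2)) ν)
    {s : ℝ} (hs : 0 ≤ s) : IntegrableOn (fun z ↦ exp (s * z) - 1) (Iic (-1)) ν := by
  have := isFiniteMeasure_restrict_Iic_neg_one hν
  refine Integrable.mono' (integrable_const 1) (by fun_prop)
    (ae_restrict_of_forall_mem measurableSet_Iic fun z (hz : z ≤ -1) ↦ ?_)
  have : exp (s * z) ≤ 1 := exp_le_one_iff.2 (by nlinarith)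
  rw [Real.norm_eq_abs, abs_le]
  constructor <;> linarith [exp_pos (s * z)]

variable {γ σ : ℝ}

lemma psi_eq_add_integral_Ioo_add_integral_Iic (hν : Integrable (fun z ↦ min 1 (z ^ 2)) ν)
    {s : ℝ} (hs0 : 0 ≤ s) (hs1 : s ≤ 1) :
    psi γ σ ν s = γ * s + σ ^ 2 * s ^ 2 / 2
      + ∫ z in Ioo (-1) 0, (exp (s * z) - 1 - s * z) ∂ν
      + ∫ z in Iic (-1), (exp (s * z) - 1) ∂ν := by
  set k : ℝ → ℝ := fun z ↦ exp (s * z) - 1 - s * z * (if -1 < z then (1:ℝ) else 0)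
  have hIic : EqOn k (fun z ↦ exp (s * z) - 1) (Iic (-1)) := fun z (hz : z ≤ -1) ↦ by
    simp [k, not_lt.2 hz]
  have hIoo : EqOn k (fun z ↦ exp (s * z) - 1 - s * z) (Ioo (-1) 0) := fun z hz ↦ by
    simp [k, hz.1]
  rw [psi, ← Iic_union_Ioo_eq_Iio (by norm_num : (-1:ℝ) < 0),
    setIntegral_union (Iic_disjoint_Ioi le_rfl |>.mono_right Ioo_subset_Ioi_self)
      measurableSet_Ioo
      ((integrableOn_exp_mul_sub_one_Iic hν hs0).congr_fun hIic.symm measurableSet_Iic)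
      ((integrableOn_exp_mul_sub_one_sub_Ioo hν (abs_le.2 ⟨by linarith, hs1⟩)).congr_fun
        hIoo.symm measurableSet_Ioo),
    setIntegral_congr_fun measurableSet_Iic hIic, setIntegral_congr_fun measurableSet_Ioo hIoo]
  ring

lemma tendsto_integral_Ioo_exp_mul_sub_one_sub_div (hν : Integrable (fun z ↦ min 1 (z ^ 2)) ν) :
    Tendsto (fun s ↦ (∫ z in Ioo (-1) 0, (exp (s * z) - 1 - s * z) ∂ν) / s) (𝓝[>] 0) (𝓝 0) := by
  set C := ∫ z in Ioo (-1) 0, z ^ 2 ∂ν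
  have hC : Tendsto (fun s ↦ s * C) (𝓝[>] 0) (𝓝 0) :=
    ((continuous_mul_const C).tendsto' 0 0 (zero_mul C)).mono_left nhdsWithin_le_nhds
  refine squeeze_zero_norm' ?_ hC
  filter_upwards [Ioc_mem_nhdsGT zero_lt_one] with s hs
  have hint : ‖∫ z in Ioo (-1) 0, (exp (s * z) - 1 - s * z) ∂ν‖ ≤ s ^ 2 * C := by
    rw [← integral_const_mul]
    refine norm_integral_le_of_norm_le ((integrableOn_sq_Ioo_neg_one_zero hν).const_mul _)
      (ae_restrict_of_forall_mem measurableSet_Ioo fun z hz ↦ ?_)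
    exact norm_exp_mul_sub_one_sub_le (abs_le.2 ⟨by linarith [hs.1], hs.2⟩)
      (abs_le.2 ⟨hz.1.le, by linarith [hz.2]⟩)
  rw [norm_div, Real.norm_of_nonneg hs.1.le, div_le_iff₀ hs.1]
  nlinarith

lemma tendsto_integral_Iic_one_sub_exp_mul_div (hν : Integrable (fun z ↦ min 1 (z ^ 2)) ν)
    {psi'0 : ℝ} (hψ : HasDerivWithinAt (psi γ σ ν) psi'0 (Ici 0) 0) :
    Tendsto (fun s ↦ ∫ z in Iic (-1), (1 - exp (s * z)) / s ∂ν) (𝓝[>] 0)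
      (𝓝 (γ - psi'0)) := by
  have hslope : Tendsto (fun s ↦ psi γ σ ν s / s) (𝓝[>] 0) (𝓝 psi'0) := by
    have := (hasDerivWithinAt_iff_tendsto_slope' self_notMem_Ioi).1
      (hψ.mono Ioi_subset_Ici_self)
    have hψ0 : psi γ σ ν 0 = 0 := by simp [psi]
    refine this.congr fun s ↦ ?_
    simp [slope_def_field, hψ0]
  have hdiffusion : Tendsto (fun s ↦ σ ^ 2 * s / 2) (𝓝[>] 0) (𝓝 0) :=
    ((continuous_const.mul continuous_id).div_const 2 |>.tendsto' 0 0 (by simp)).mono_left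
      nhdsWithin_le_nhds
  have hlim := ((tendsto_const_nhds (x := γ)).add hdiffusion).add
    (tendsto_integral_Ioo_exp_mul_sub_one_sub_div hν) |>.sub hslope
  rw [add_zero, add_zero] at hlim
  refine hlim.congr' ?_
  filter_upwards [Ioc_mem_nhdsGT zero_lt_one] with s hs
  have hsplit := psi_eq_add_integral_Ioo_add_integral_Iic (γ := γ) (σ := σ) hν hs.1.le hs.2
  have hbig : ∫ z in Iic (-1), (1 - exp (s * z)) / s ∂ν
      = -(∫ z in Iic (-1), (exp (s * z) - 1) ∂ν) / s := by
    rw [integral_div, ← integral_neg]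
    simp only [neg_sub]
  have hs0 : s ≠ 0 := hs.1.ne'
  rw [hbig, hsplit]
  field_simp
  ring

lemma one_sub_exp_mul_div_mem_Icc {s z : ℝ} (hs : 0 < s) (hz : z ≤ 0) :
    (1 - exp (s * z)) / s ∈ Icc 0 (-z) := by
  have h1 : exp (s * z) ≤ 1 := exp_le_one_iff.2 (by nlinarith)
  have h2 : s * z + 1 ≤ exp (s * z) := add_one_le_exp _
  refine ⟨div_nonneg (by linarith) hs.le, ?_⟩
  rw [div_le_iff₀ hs]
  linarith

lemma tendsto_one_sub_exp_mul_div (z : ℝ) :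
    Tendsto (fun s ↦ (1 - exp (s * z)) / s) (𝓝[>] 0) (𝓝 (-z)) := by
  have hderiv : HasDerivAt (fun s ↦ exp (s * z)) z 0 := by
    simpa using ((hasDerivAt_id (0:ℝ)).mul_const z).exp
  have := (hasDerivAt_iff_tendsto_slope.1 hderiv).neg.mono_left
    (nhdsWithin_mono _ fun s (hs : 0 < s) ↦ hs.ne')
  refine this.congr fun s ↦ ?_
  simp only [slope_def_field, zero_mul, exp_zero, sub_zero]
  ring

lemma integrableOn_Iic_and_integral_eq_of_hasDerivWithinAt_psi
    (hν : Integrable (fun z ↦ min 1 (z ^ 2)) ν)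
    {psi'0 : ℝ} (hψ : HasDerivWithinAt (psi γ σ ν) psi'0 (Ici 0) 0) :
    IntegrableOn (fun z ↦ z) (Iic (-1)) ν ∧ ∫ z in Iic (-1), z ∂ν = psi'0 - γ := by
  obtain ⟨hint, hval⟩ := integrable_and_integral_eq_of_tendsto_of_le
    (μ := ν.restrict (Iic (-1))) (l := 𝓝[>] 0) (g := fun z ↦ -z)
    (fun s ↦ by fun_prop)
    (by
      filter_upwards [self_mem_nhdsWithin] with s (hs : 0 < s)
      simpa [neg_sub] using ((integrableOn_exp_mul_sub_one_Iic hν hs.le).neg.div_const s))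
    (by
      filter_upwards [self_mem_nhdsWithin] with s (hs : 0 < s)
      exact ae_restrict_of_forall_mem measurableSet_Iic fun z (hz : z ≤ -1) ↦
        one_sub_exp_mul_div_mem_Icc hs (by linarith))
    (.of_forall tendsto_one_sub_exp_mul_div)
    (tendsto_integral_Iic_one_sub_exp_mul_div hν hψ)
  refine ⟨integrable_neg_iff.1 hint, ?_⟩
  rw [integral_neg] at hval
  linarith

end LevyMeasure

section ExponentialWeight

open Real

variable {Φ : ℝ}

lemma exp_neg_mul_sub (Φ x y : ℝ) : exp (-Φ * (y - x)) = exp (Φ * x) * exp (-Φ * y) := by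
  rw [← exp_add]
  ring_nf

lemma PsiInt_eq_exp_mul (Φ x : ℝ) (g : ℝ → ℝ) :
    PsiInt Φ x g = exp (Φ * x) * ∫ y in Ioi x, exp (-Φ * y) * g y := by
  simp_rw [PsiInt, exp_neg_mul_sub Φ x, mul_assoc, integral_const_mul]

lemma integrableOn_exp_neg_mul_sub_mul_of_abs {g : ℝ → ℝ} (hg : Measurable g) {x : ℝ}
    (h : IntegrableOn (fun y ↦ exp (-Φ * (y - x)) * |g y|) (Ioi x)) :
    IntegrableOn (fun y ↦ exp (-Φ * (y - x)) * g y) (Ioi x) :=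
  (integrable_norm_iff (by fun_prop)).1 <| h.congr_fun
    (fun y _ ↦ by simp [abs_of_pos (exp_pos _)]) measurableSet_Ioi

lemma integral_exp_neg_mul_sub_Ioi (hΦ : 0 < Φ) (x : ℝ) :
    ∫ y in Ioi x, exp (-Φ * (y - x)) = Φ⁻¹ := by
  simp_rw [exp_neg_mul_sub Φ x]
  rw [integral_const_mul, integral_exp_mul_Ioi (neg_lt_zero.2 hΦ), neg_div_neg_eq,
    ← mul_div_assoc, ← exp_add]
  simp

lemma integrableOn_exp_neg_mul_sub_Ioi (hΦ : 0 < Φ) (x : ℝ) :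
    IntegrableOn (fun y ↦ exp (-Φ * (y - x))) (Ioi x) := by
  simp_rw [exp_neg_mul_sub Φ x]
  exact (integrableOn_exp_mul_Ioi (neg_lt_zero.2 hΦ) x).const_mul _

lemma tendsto_exp_neg_mul_mul_atTop (hΦ : 0 < Φ) :
    Tendsto (fun y ↦ exp (-Φ * y) * y) atTop (𝓝 0) := by
  have h := (tendsto_pow_mul_exp_neg_atTop_nhds_zero 1).comp
    (tendsto_id.const_mul_atTop hΦ) |>.div_const Φ
  rw [zero_div] at h
  refine h.congr fun y ↦ ?_
  simp only [Function.comp_apply, id, pow_one, neg_mul]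
  field_simp

variable {g : ℝ → ℝ}

lemma continuous_PsiInt (hg : ∀ x, IntegrableOn (fun y ↦ exp (-Φ * (y - x)) * g y) (Ioi x)) :
    Continuous fun x ↦ PsiInt Φ x g := by
  set w : ℝ → ℝ := fun y ↦ exp (-Φ * y) * g y
  have hw : ∀ x, IntegrableOn w (Ioi x) := fun x ↦
    IntegrableOn.congr_fun ((hg x).const_mul (exp (-Φ * x)))
      (fun y _ ↦ by simp only [w, exp_neg_mul_sub Φ x, ← mul_assoc, ← exp_add]; ring_nf)
      measurableSet_Ioi
  have hprim : (fun x ↦ PsiInt Φ x g)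
      = fun x ↦ exp (Φ * x) * ((∫ y in Ioi 0, w y) - ∫ y in 0..x, w y) := funext fun x ↦ by
    rw [PsiInt_eq_exp_mul, ← intervalIntegral.integral_Ioi_sub_Ioi' (hw 0) (hw x),
      sub_sub_cancel]
  rw [hprim]
  refine (by fun_prop : Continuous fun x ↦ exp (Φ * x)).mul
    (continuous_const.sub (intervalIntegral.continuous_primitive (fun a b ↦ ?_) 0))
  exact ((hw (a ⊓ b - 1)).mono_set fun y hy ↦ (sub_one_lt _).trans_le hy.1).intervalIntegrable

lemma PsiInt_nonpos_of_forall_lt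
    (hg : ∀ x, IntegrableOn (fun y ↦ exp (-Φ * (y - x)) * g y) (Ioi x)) {a : ℝ}
    (hneg : ∀ x < a, PsiInt Φ x g < 0) : PsiInt Φ a g ≤ 0 :=
  le_of_tendsto ((continuous_PsiInt hg).tendsto a |>.mono_left (nhdsWithin_le_nhds (s := Iio a)))
    (eventually_nhdsWithin_of_forall fun x hx ↦ (hneg x hx).le)

lemma PsiInt_add_const (hΦ : 0 < Φ) {x : ℝ}
    (hg : IntegrableOn (fun y ↦ exp (-Φ * (y - x)) * g y) (Ioi x)) (c : ℝ) :
    PsiInt Φ x (fun y ↦ g y + c) = PsiInt Φ x g + c / Φ := by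
  simp_rw [PsiInt, mul_add]
  rw [integral_add hg ((integrableOn_exp_neg_mul_sub_Ioi hΦ x).mul_const c), integral_mul_const,
    integral_exp_neg_mul_sub_Ioi hΦ, inv_mul_eq_div]

variable {f f' : ℝ → ℝ} {s : ℝ}

lemma PsiInt_eq_of_hasDerivWithinAt (hf : Continuous f)
    (hf' : ∀ x, HasDerivWithinAt f (f' x) (Ici x) x)
    (htail : Tendsto (fun y ↦ exp (-Φ * y) * f y) atTop (𝓝 0))
    (hfi : IntegrableOn (fun y ↦ exp (-Φ * (y - s)) * f y) (Ioi s))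
    (hf'i : IntegrableOn (fun y ↦ exp (-Φ * (y - s)) * f' y) (Ioi s)) :
    PsiInt Φ s f' = Φ * PsiInt Φ s f - f s := by
  have hderiv : ∀ x ∈ Ioi s, HasDerivWithinAt (fun y ↦ exp (-Φ * (y - s)) * f y)
      (exp (-Φ * (x - s)) * f' x - Φ * (exp (-Φ * (x - s)) * f x)) (Ioi x) x := fun x _ ↦ by
    have hexp := (((hasDerivAt_id x).sub_const s).const_mul (-Φ)).exp
    refine (hexp.hasDerivWithinAt.mul ((hf' x).mono Ioi_subset_Ici_self)).congr_deriv ?_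
    simp only [id]
    ring
  have hlim : Tendsto (fun y ↦ exp (-Φ * (y - s)) * f y) atTop (𝓝 0) := by
    have h := htail.const_mul (exp (Φ * s))
    rw [mul_zero] at h
    exact h.congr fun y ↦ by rw [exp_neg_mul_sub Φ s, mul_assoc]
  have hibp := integral_Ioi_of_hasDerivWithinAt_Ioi_of_tendsto (by fun_prop) hderiv
    (hf'i.sub (hfi.const_mul Φ)) hlim
  rw [integral_sub hf'i (hfi.const_mul Φ), integral_const_mul] at hibp
  simp only [sub_self, mul_zero, exp_zero, one_mul, zero_sub] at hibp
  rw [PsiInt, PsiInt]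
  linarith

lemma PsiInt_add_const_eq_of_hasDerivWithinAt (hΦ : 0 < Φ) (hf : Continuous f)
    (hf' : ∀ x, HasDerivWithinAt f (f' x) (Ici x) x) {c : ℝ}
    (htail : Tendsto (fun y ↦ exp (-Φ * y) * (f y + c * y)) atTop (𝓝 0))
    (hfi : IntegrableOn (fun y ↦ exp (-Φ * (y - s)) * f y) (Ioi s))
    (hf'i : IntegrableOn (fun y ↦ exp (-Φ * (y - s)) * (f' y + c)) (Ioi s)) :
    PsiInt Φ s (fun y ↦ f' y + c) = Φ * PsiInt Φ s f - f s + c / Φ := by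
  have hf'i' : IntegrableOn (fun y ↦ exp (-Φ * (y - s)) * f' y) (Ioi s) :=
    (hf'i.sub ((integrableOn_exp_neg_mul_sub_Ioi hΦ s).mul_const c)).congr_fun
      (fun y _ ↦ by simp only [Pi.sub_apply]; ring) measurableSet_Ioi
  have htail' : Tendsto (fun y ↦ exp (-Φ * y) * f y) atTop (𝓝 0) := by
    simpa [mul_add, ← mul_assoc, mul_comm _ c] using
      htail.sub ((tendsto_exp_neg_mul_mul_atTop hΦ).const_mul c)
  rw [PsiInt_add_const hΦ hf'i' c, PsiInt_eq_of_hasDerivWithinAt hf hf' htail' hfi hf'i']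

end ExponentialWeight

theorem stmt7_general
    (γ σ q : ℝ) (ν : Measure ℝ) (W : ℝ → ℝ)
    (hνint : Integrable (fun z => min 1 (z ^ 2)) ν)
    (hq : 0 < q)
    (hΦpos : 0 < PhiQ γ σ ν q)
    (hWzero : ∀ x < 0, W x = 0)
    (psi'0 : ℝ) (hpsi'0 : HasDerivWithinAt (psi γ σ ν) psi'0 (Set.Ici 0) 0)
    (C_U : ℝ) (f f' : ℝ → ℝ) (hf : Continuous f)
    (hf' : ∀ x, HasDerivWithinAt f (f' x) (Set.Ici x) x)
    (s : ℝ)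
    (hftail : Tendsto (fun y => Real.exp (-(PhiQ γ σ ν q) * y) * (f y + C_U * q * y))
      atTop (𝓝 0))
    (hfint : IntegrableOn
      (fun y => Real.exp (-(PhiQ γ σ ν q) * (y - s)) * |f y|) (Set.Ioi s))
    (hf'int : ∀ x : ℝ, IntegrableOn
      (fun y => Real.exp (-(PhiQ γ σ ν q) * (y - x)) * |f' y + C_U * q|) (Set.Ioi x))
    (aund abar : ℝ) (haa : aund ≤ abar)
    (habar1 : ∀ x < abar, f' x + C_U * q < 0)
    (hund1 : ∀ x < aund, PsiInt (PhiQ γ σ ν q) x (fun y => f' y + C_U * q) < 0)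
    (hs : s ≤ aund) :
    ∀ x < s,
      vImp q (PhiQ γ σ ν q) psi'0 C_U s W f x
          = vImp q (PhiQ γ σ ν q) psi'0 C_U s W f s - C_U * (x - s) ∧
      IntegrableOn (genInt (vImp q (PhiQ γ σ ν q) psi'0 C_U s W f) x) (Set.Iio 0) ν ∧
      Lgen γ σ ν (vImp q (PhiQ γ σ ν q) psi'0 C_U s W f) x
          - q * vImp q (PhiQ γ σ ν q) psi'0 C_U s W f x + f x
        = (f x + C_U * q * x) - (f s + C_U * q * s)
            - PsiInt (PhiQ γ σ ν q) s (fun y => f' y + C_U * q) ∧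
      0 ≤ (f x + C_U * q * x) - (f s + C_U * q * s)
            - PsiInt (PhiQ γ σ ν q) s (fun y => f' y + C_U * q) := by
  intro x hx
  set Φ := PhiQ γ σ ν q
  set v := vImp q Φ psi'0 C_U s W f
  have hvs : v s = Φ / q * PsiInt Φ s f + C_U / Φ - C_U * (psi'0 / q) := by
    simpa using vImp_of_le hWzero Φ psi'0 C_U f le_rfl
  have hv : ∀ y ≤ s, v y = v s + -C_U * (y - s) := fun y hy ↦ by
    rw [hvs]
    simp only [v, vImp_of_le hWzero Φ psi'0 C_U f hy]
    ring
  obtain ⟨hmoment, hmoment_eq⟩ :=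
    integrableOn_Iic_and_integral_eq_of_hasDerivWithinAt_psi hνint hpsi'0
  obtain ⟨hint, hL⟩ := Lgen_of_affine_Iic (γ := γ) (σ := σ) hv hx hmoment
  have hg : ∀ y, IntegrableOn (fun z ↦ Real.exp (-Φ * (z - y)) * (f' z + C_U * q)) (Ioi y) :=
    fun y ↦ integrableOn_exp_neg_mul_sub_mul_of_abs
      ((measurable_of_hasDerivWithinAt_Ici hf').add_const _) (hf'int y)
  have hibp := PsiInt_add_const_eq_of_hasDerivWithinAt hΦpos hf hf' hftail
    (integrableOn_exp_neg_mul_sub_mul_of_abs hf.measurable hfint) (hg s)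
  refine ⟨by rw [hv x hx.le]; ring, hint, ?_, ?_⟩
  · rw [hL, hmoment_eq, hv x hx.le, hvs, hibp]
    field_simp
    ring
  · have hdecr : f s + C_U * q * s ≤ f x + C_U * q * x :=
      antitoneOn_Iic_of_hasDerivWithinAt_Ici_nonpos (g := fun y ↦ f y + C_U * q * y)
        (g' := fun y ↦ f' y + C_U * q) (a := abar) (by fun_prop)
        (fun y ↦ ((hf' y).add ((hasDerivAt_id' y).const_mul (C_U * q)).hasDerivWithinAt).congr_deriv
          (by rw [mul_one]))
        (fun y hy ↦ (habar1 y hy).le) (hx.le.trans (hs.trans haa)) (hs.trans haa) hx.le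
    linarith [PsiInt_nonpos_of_forall_lt hg fun y hy ↦ hund1 y (hy.trans_le hs)]

theorem stmt7
    (γ σ q : ℝ) (ν : Measure ℝ) (W : ℝ → ℝ)
    (hσ : 0 ≤ σ)
    (hνconc : ν (Set.Ici 0) = 0)
    (hνint : Integrable (fun z => min 1 (z ^ 2)) ν)
    (hψtop : Tendsto (psi γ σ ν) atTop atTop)
    (hq : 0 < q)
    (hΦpos : 0 < PhiQ γ σ ν q)
    (hWnonneg : ∀ x, 0 ≤ W x)
    (hWzero : ∀ x < 0, W x = 0)
    (hWcont : ContinuousOn W (Set.Ici 0))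
    (hWmono : StrictMonoOn W (Set.Ici 0))
    (hWlaplace : ∀ s, PhiQ γ σ ν q < s →
      ∫ x in Set.Ioi (0:ℝ), Real.exp (-s * x) * W x = 1 / (psi γ σ ν s - q))
    (psi'0 : ℝ) (hpsi'0 : HasDerivWithinAt (psi γ σ ν) psi'0 (Set.Ici 0) 0)
    (C_U : ℝ) (f f' : ℝ → ℝ) (hf : Continuous f)
    (hf' : ∀ x, HasDerivWithinAt f (f' x) (Set.Ici x) x)
    (s : ℝ)
    (hftail : Tendsto (fun y => Real.exp (-(PhiQ γ σ ν q) * y) * (f y + C_U * q * y))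
      atTop (𝓝 0))
    (hfint : IntegrableOn
      (fun y => Real.exp (-(PhiQ γ σ ν q) * (y - s)) * |f y|) (Set.Ioi s))
    (hf'int : ∀ x : ℝ, IntegrableOn
      (fun y => Real.exp (-(PhiQ γ σ ν q) * (y - x)) * |f' y + C_U * q|) (Set.Ioi x))
    (aund abar : ℝ) (haa : aund ≤ abar)
    (habar1 : ∀ x < abar, f' x + C_U * q < 0)
    (habar2 : ∀ x, abar < x → 0 < f' x + C_U * q)
    (hund1 : ∀ x < aund, PsiInt (PhiQ γ σ ν q) x (fun y => f' y + C_U * q) < 0)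
    (hund2 : ∀ x, aund < x → 0 < PsiInt (PhiQ γ σ ν q) x (fun y => f' y + C_U * q))
    (hs : s ≤ aund) :
    ∀ x < s,
      vImp q (PhiQ γ σ ν q) psi'0 C_U s W f x
          = vImp q (PhiQ γ σ ν q) psi'0 C_U s W f s - C_U * (x - s) ∧
      IntegrableOn (genInt (vImp q (PhiQ γ σ ν q) psi'0 C_U s W f) x) (Set.Iio 0) ν ∧
      Lgen γ σ ν (vImp q (PhiQ γ σ ν q) psi'0 C_U s W f) x
          - q * vImp q (PhiQ γ σ ν q) psi'0 C_U s W f x + f x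
        = (f x + C_U * q * x) - (f s + C_U * q * s)
            - PsiInt (PhiQ γ σ ν q) s (fun y => f' y + C_U * q) ∧
      0 ≤ (f x + C_U * q * x) - (f s + C_U * q * s)
            - PsiInt (PhiQ γ σ ν q) s (fun y => f' y + C_U * q) :=
  stmt7_general γ σ q ν W hνint hq hΦpos hWzero psi'0 hpsi'0 C_U f f' hf hf' s hftail hfint hf'int
    aund abar haa habar1 hund1 hs
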